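/- Let θ ∈ ℝ be irrational and let g = [[a,b],[c,d]] ∈ SL₂(ℤ) satisfy (aθ+b)/(cθ+d) = θ, with c > 0 and cθ+d > 0; set ε = (cθ+d)/c. Let E be the space of functions f : ℝ × ℤ/cℤ → ℂ that are Schwartz in the first variable, and define operators on E by (Ûf)(x,[n]) = f(x−1/c, [n−a]) and (V̂f)(x,[n]) = exp(2πix/(cε))·exp(−2πi n̄/c)·f(x,[n]), where n̄ ∈ {0,…,c−1} represents [n]. Then Û∘V̂ = exp(2πiθ)·(V̂∘Û). -/

import Mathlib

open Complex Real

/-- `f : ℝ × ℤ/cℤ → ℂ` is Schwartz in the first variable. -/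
def SchwartzInFirst {c : ℕ} (f : ℝ × ZMod c → ℂ) : Prop :=
  ∀ n : ZMod c, ∃ g : SchwartzMap ℝ ℂ, ∀ x : ℝ, f (x, n) = g x

/-- The operator `Û`: `(Ûf)(x,[n]) = f(x−1/c, [n−a])`. -/
noncomputable def Uhat (a : ℤ) {c : ℕ} (f : ℝ × ZMod c → ℂ) : ℝ × ZMod c → ℂ :=
  fun p => f (p.1 - 1 / (c : ℝ), p.2 - (a : ZMod c))

/-- The operator `V̂`: `(V̂f)(x,[n]) = exp(2πix/(cε))·exp(−2πi n̄/c)·f(x,[n])`. -/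
noncomputable def Vhat (ε : ℝ) {c : ℕ} (f : ℝ × ZMod c → ℂ) : ℝ × ZMod c → ℂ :=
  fun p => Complex.exp (2 * π * I * (p.1 : ℂ) / ((c : ℂ) * (ε : ℂ))) *
    Complex.exp (-2 * π * I * ((p.2.val : ℕ) : ℂ) / (c : ℂ)) * f p

/-! The fixed-point equation `gθ = θ` together with `det g = 1` forces `θ = a/c - 1/(c²ε)`:
translating by `1/c` multiplies the first phase of `V̂` by `exp(-2πi/(c²ε))`, and shifting
`[n]` by `a` multiplies the character `[n] ↦ exp(-2πi n̄/c)` by `exp(2πia/c)`; together these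
give `exp(2πiθ)`. -/

theorem moebius_eq_div_sub_inv {K : Type*} [Field K] {a b c d θ : K}
    (hdet : a * d - b * c = 1) (hc : c ≠ 0) (hθ : c * θ + d ≠ 0) :
    (a * θ + b) / (c * θ + d) = a / c - 1 / (c * (c * θ + d)) := by
  have hcθ : c * (c * θ + d) ≠ 0 := mul_ne_zero hc hθ
  rw [div_sub_div _ _ hc hcθ, div_eq_div_iff hθ (mul_ne_zero hc hcθ)]
  linear_combination -(c * (c * θ + d)) * hdet

theorem ZMod.exp_neg_val_sub_intCast {N : ℕ} [NeZero N] (n : ZMod N) (a : ℤ) :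
    exp (-2 * π * I * ((n - a).val : ℂ) / N) =
      exp (2 * π * I * a / N) * exp (-2 * π * I * (n.val : ℂ) / N) := by
  have h (m : ZMod N) : exp (-2 * π * I * (m.val : ℂ) / N) = (ZMod.stdAddChar m)⁻¹ := by
    rw [ZMod.stdAddChar_apply, ZMod.toCircle_apply, ← Complex.exp_neg]
    ring_nf
  rw [h, h, AddChar.map_sub_eq_div, ZMod.stdAddChar_coe, inv_div, div_eq_mul_inv]

theorem exp_two_pi_I_translate_mul_exp {θ c ε : ℝ} (a : ℤ) (x : ℝ) (hc : c ≠ 0) (hε : ε ≠ 0)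
    (hθ : θ = a / c - 1 / (c * (c * ε))) :
    exp (2 * π * I * ((x - 1 / c : ℝ) : ℂ) / (c * ε)) * exp (2 * π * I * a / c) =
      exp (2 * π * I * θ) * exp (2 * π * I * x / (c * ε)) := by
  rw [← Complex.exp_add, ← Complex.exp_add, hθ]
  have hcC : (c : ℂ) ≠ 0 := ofReal_ne_zero.mpr hc
  have hεC : (ε : ℂ) ≠ 0 := ofReal_ne_zero.mpr hε
  congr 1
  push_cast
  field_simp
  ring

theorem Uhat_Vhat_relation
    (θ : ℝ)
    (a b d : ℤ) (c : ℕ) (hc : 0 < c)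
    (hdet : a * d - b * (c : ℤ) = 1)
    (hpos : 0 < (c : ℝ) * θ + (d : ℝ))
    (hfix : ((a : ℝ) * θ + (b : ℝ)) / ((c : ℝ) * θ + (d : ℝ)) = θ)
    (ε : ℝ) (hε : ε = ((c : ℝ) * θ + (d : ℝ)) / (c : ℝ))
    (f : ℝ × ZMod c → ℂ) :
    ∀ p : ℝ × ZMod c,
      Uhat a (Vhat ε f) p =
        Complex.exp (2 * π * I * (θ : ℂ)) * Vhat ε (Uhat a f) p := by
  rintro ⟨x, n⟩
  have : NeZero c := ⟨hc.ne'⟩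
  have hcR : (c : ℝ) ≠ 0 := NeZero.ne _
  have hcε : (c : ℝ) * ε = c * θ + d := by rw [hε]; field_simp
  have hdetR : (a : ℝ) * d - b * c = 1 := by exact_mod_cast hdet
  have hθ : θ = a / c - 1 / (c * (c * ε)) := by
    rw [hcε, ← moebius_eq_div_sub_inv hdetR hcR hpos.ne', hfix]
  have hε0 : ε ≠ 0 := right_ne_zero_of_mul (hcε ▸ hpos.ne')
  simp only [Uhat, Vhat]
  have hphase := exp_two_pi_I_translate_mul_exp a x hcR hε0 hθ
  push_cast at hphase
  rw [ZMod.exp_neg_val_sub_intCast]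
  push_cast
  linear_combination
    exp (-2 * π * I * (n.val : ℂ) / c) * f (x - 1 / c, n - a) * hphase
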